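/- Let U ∈ ℝ^{w×r} have orthonormal columns u₁, …, u_r, let σ₁, …, σ_r > 0, let E ∈ ℝ^{w×r} have columns e₁, …, e_r with ‖e_i‖₂ < σ_i for every i, and let Δ ∈ ℝ^{p×r} be any matrix. Define σ̂_i = ‖σ_i·u_i + e_i‖₂ > 0 and let Û ∈ ℝ^{w×r} be the matrix whose i-th column is (σ_i·u_i + e_i)/σ̂_i. Then ‖Û − U‖_F + ‖Δ‖_F + ‖Û − U‖_F·‖Δ‖_F ≤ 2‖E‖_F·(1 + ‖Δ‖_F)/min_{1≤i≤r}(σ_i − ‖e_i‖₂) + ‖Δ‖_F. -/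

import Mathlib

/-! For a unit vector `u` and `x = σ • u + e`, the identity
`‖x‖ • (‖x‖⁻¹ • x - u) = (x - σ • u) + (σ - ‖x‖) • u` shows, by the reverse triangle inequality,
that `‖x‖⁻¹ • x - u` has norm at most `2‖e‖ / ‖x‖ ≤ 2‖e‖ / (σ - ‖e‖)`. Applied column by column
this gives `‖Û - U‖_F ≤ 2‖E‖_F / m` with `m = min_i (σ_i - ‖e_i‖₂)`, and the claim is this bound
multiplied by `1 + ‖Δ‖_F`. -/

open Matrix

/-- Euclidean norm of a vector in ℝ^n. -/
noncomputable def vnorm {n : ℕ} (v : Fin n → ℝ) : ℝ :=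
  Real.sqrt (∑ i, (v i) ^ 2)

/-- Frobenius norm of a real matrix. -/
noncomputable def frob {m n : ℕ} (M : Matrix (Fin m) (Fin n) ℝ) : ℝ :=
  Real.sqrt (∑ i, ∑ j, (M i j) ^ 2)

theorem norm_mul_norm_inv_norm_smul_sub_le {V : Type*} [NormedAddCommGroup V] [NormedSpace ℝ V]
    {u : V} (hu : ‖u‖ = 1) (x : V) {c : ℝ} (hc : 0 ≤ c) :
    ‖x‖ * ‖‖x‖⁻¹ • x - u‖ ≤ 2 * ‖x - c • u‖ := by
  rcases eq_or_ne x 0 with rfl | hx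
  · simp
  have hcu : ‖c • u‖ = c := by rw [norm_smul, hu, mul_one, Real.norm_of_nonneg hc]
  have hc_sub : |c - ‖x‖| ≤ ‖x - c • u‖ :=
    calc |c - ‖x‖| = |‖c • u‖ - ‖x‖| := by rw [hcu]
      _ ≤ ‖c • u - x‖ := abs_norm_sub_norm_le _ _
      _ = ‖x - c • u‖ := norm_sub_rev _ _
  calc ‖x‖ * ‖‖x‖⁻¹ • x - u‖ = ‖‖x‖ • (‖x‖⁻¹ • x - u)‖ := by rw [norm_smul, norm_norm]
    _ = ‖(x - c • u) + (c - ‖x‖) • u‖ := by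
        rw [smul_sub, smul_inv_smul₀ (norm_ne_zero_iff.mpr hx), sub_smul]
        abel_nf
    _ ≤ ‖x - c • u‖ + |c - ‖x‖| := by
        grw [norm_add_le, norm_smul, hu, mul_one, Real.norm_eq_abs]
    _ ≤ ‖x - c • u‖ + ‖x - c • u‖ := by grw [hc_sub]
    _ = 2 * ‖x - c • u‖ := by ring

theorem norm_inv_norm_smul_add_sub_le {V : Type*} [NormedAddCommGroup V] [NormedSpace ℝ V]
    {u : V} (hu : ‖u‖ = 1) (e : V) {σ m : ℝ} (hm : 0 < m) (hme : m ≤ σ - ‖e‖) :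
    ‖‖σ • u + e‖⁻¹ • (σ • u + e) - u‖ ≤ 2 / m * ‖e‖ := by
  have hσ : 0 ≤ σ := by linarith [norm_nonneg e]
  have hmx : m ≤ ‖σ • u + e‖ := by
    have := norm_sub_le (σ • u + e) e
    rw [add_sub_cancel_right, norm_smul, hu, mul_one, Real.norm_of_nonneg hσ] at this
    linarith
  have key := norm_mul_norm_inv_norm_smul_sub_le hu (σ • u + e) hσ
  rw [add_sub_cancel_left] at key
  calc ‖‖σ • u + e‖⁻¹ • (σ • u + e) - u‖ ≤ 2 * ‖e‖ / ‖σ • u + e‖ := by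
        rw [le_div_iff₀ (hm.trans_le hmx)]; linarith
    _ ≤ 2 * ‖e‖ / m := by gcongr
    _ = 2 / m * ‖e‖ := by ring

theorem vnorm_eq_norm_toLp {n : ℕ} (v : Fin n → ℝ) : vnorm v = ‖WithLp.toLp 2 v‖ := by
  simp [vnorm, EuclideanSpace.norm_eq]

theorem frob_eq_sqrt_sum_vnorm_col_sq {m n : ℕ} (A : Matrix (Fin m) (Fin n) ℝ) :
    frob A = Real.sqrt (∑ j, vnorm (fun i => A i j) ^ 2) := by
  simp only [frob, vnorm, Real.sq_sqrt (Finset.sum_nonneg fun _ _ => sq_nonneg _)]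
  rw [Finset.sum_comm]

theorem frob_le_mul_of_vnorm_col_le {m n : ℕ} {A B : Matrix (Fin m) (Fin n) ℝ} {c : ℝ}
    (hc : 0 ≤ c) (h : ∀ j, vnorm (fun i => A i j) ≤ c * vnorm (fun i => B i j)) :
    frob A ≤ c * frob B := by
  rw [frob_eq_sqrt_sum_vnorm_col_sq, frob_eq_sqrt_sum_vnorm_col_sq, ← Real.sqrt_sq hc,
    ← Real.sqrt_mul (sq_nonneg c), Finset.mul_sum]
  gcongr with j
  rw [← mul_pow]
  exact pow_le_pow_left₀ (Real.sqrt_nonneg _) (h j) 2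

theorem vnorm_col_eq_one_of_transpose_mul_self {m n : ℕ} {U : Matrix (Fin m) (Fin n) ℝ}
    (hU : Uᵀ * U = 1) (j : Fin n) :
    vnorm (fun i => U i j) = 1 := by
  have h := congrFun (congrFun hU j) j
  simp only [mul_apply, transpose_apply, one_apply_eq] at h
  simp [vnorm, sq, h]

theorem lt_ciInf_of_finite {ι α : Type*} [Finite ι] [Nonempty ι]
    [ConditionallyCompleteLinearOrder α] {f : ι → α} {a : α} (h : ∀ i, a < f i) :
    a < ⨅ i, f i := by
  obtain ⟨i, hi⟩ := exists_eq_ciInf_of_finite (f := f)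
  exact hi ▸ h i

theorem vnorm_normalize_col_sub_le {n : ℕ} {u : Fin n → ℝ} (hu : vnorm u = 1) (e : Fin n → ℝ)
    {σ m : ℝ} (hm : 0 < m) (hme : m ≤ σ - vnorm e) :
    vnorm (fun k => (σ * u k + e k) / vnorm (fun j => σ * u j + e j) - u k) ≤ 2 / m * vnorm e := by
  simp only [vnorm_eq_norm_toLp] at hu hme ⊢
  set x : EuclideanSpace ℝ (Fin n) := σ • WithLp.toLp 2 u + WithLp.toLp 2 e
  have hx : (WithLp.toLp 2 fun j => σ * u j + e j) = x := rfl
  have hcol : WithLp.toLp 2 (fun k => (σ * u k + e k) / ‖WithLp.toLp 2 fun j => σ * u j + e j‖ - u k)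
      = ‖x‖⁻¹ • x - WithLp.toLp 2 u := by
    rw [hx]
    ext k
    simp [x, div_eq_inv_mul, mul_add]
  rw [hcol]
  exact norm_inv_norm_smul_add_sub_le hu _ hm hme

theorem swicca_eta_component_bound_general {w r p : ℕ}
    (U E : Matrix (Fin w) (Fin r) ℝ) (hU : Uᵀ * U = 1)
    (σ : Fin r → ℝ)
    (hE : ∀ i, vnorm (fun k => E k i) < σ i)
    (Δ : Matrix (Fin p) (Fin r) ℝ) :
    frob ((Matrix.of fun k i =>
        (σ i * U k i + E k i) / vnorm (fun j => σ i * U j i + E j i)) - U)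
      + frob Δ
      + frob ((Matrix.of fun k i =>
          (σ i * U k i + E k i) / vnorm (fun j => σ i * U j i + E j i)) - U)
        * frob Δ ≤
      2 * frob E * (1 + frob Δ) / (⨅ i, (σ i - vnorm (fun k => E k i)))
        + frob Δ := by
  set m := ⨅ i, (σ i - vnorm (fun k => E k i))
  set M := (Matrix.of fun k i =>
    (σ i * U k i + E k i) / vnorm (fun j => σ i * U j i + E j i)) - U
  -- for `r = 0` the infimum is the junk value `0`, and the column bound below is vacuous
  have hm : 0 ≤ m := Real.iInf_nonneg fun i => (sub_pos.mpr (hE i)).le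
  have hM : frob M ≤ 2 / m * frob E := by
    refine frob_le_mul_of_vnorm_col_le (by positivity) fun i => ?_
    have : Nonempty (Fin r) := ⟨i⟩
    exact vnorm_normalize_col_sub_le (vnorm_col_eq_one_of_transpose_mul_self hU i) _
      (lt_ciInf_of_finite fun i => sub_pos.mpr (hE i))
      (ciInf_le (Set.finite_range _).bddBelow i)
  have hΔ : 0 ≤ frob Δ := Real.sqrt_nonneg _
  calc frob M + frob Δ + frob M * frob Δ = frob M * (1 + frob Δ) + frob Δ := by ring
    _ ≤ 2 / m * frob E * (1 + frob Δ) + frob Δ := by gcongr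
    _ = 2 * frob E * (1 + frob Δ) / m + frob Δ := by ring

/-- Bound on the first component of `η_{C,xy}` in the proof of Theorem 2 of the
SWICCA paper: with `Û` the matrix of normalized perturbed columns,
`‖Û − U‖_F + ‖Δ‖_F + ‖Û − U‖_F·‖Δ‖_F ≤
  2‖E‖_F(1 + ‖Δ‖_F)/min_i(σ_i − ‖e_i‖₂) + ‖Δ‖_F`. -/
theorem swicca_eta_component_bound {w r p : ℕ} (hr : 0 < r)
    (U E : Matrix (Fin w) (Fin r) ℝ) (hU : Uᵀ * U = 1)
    (σ : Fin r → ℝ) (hσ : ∀ i, 0 < σ i)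
    (hE : ∀ i, vnorm (fun k => E k i) < σ i)
    (Δ : Matrix (Fin p) (Fin r) ℝ) :
    frob ((Matrix.of fun k i =>
        (σ i * U k i + E k i) / vnorm (fun j => σ i * U j i + E j i)) - U)
      + frob Δ
      + frob ((Matrix.of fun k i =>
          (σ i * U k i + E k i) / vnorm (fun j => σ i * U j i + E j i)) - U)
        * frob Δ ≤
      2 * frob E * (1 + frob Δ) / (⨅ i, (σ i - vnorm (fun k => E k i)))
        + frob Δ :=
  swicca_eta_component_bound_general U E hU σ hE Δ
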